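/- Let N ≥ 2 be an integer, let γ > 0, ρ > 0 be reals, and let δ be a real with 0 < δ < √2·N·√((N−1)/(3N+1)). For λ > 0 set d(λ) = √(γλ)·δ, R(λ) = ρ² + (8γN² − 4d(λ)ρ(3N+1))/(λ(N+1)²) − 4d(λ)²(3N+1)/(λ²(N−1)(N+1)²), a(λ) = (d(λ)(6N+2) − λ(N+1)²(ρ − √(R(λ))))/(4N²), and h₃(λ) = −(2a(λ)(N−1) + (N−3)d(λ))/(λ(N−1)(N+1)). Then lim_{λ→0⁺} √(λ/γ)·h₃(λ) = −((N²−1)·D̄(N,δ) + (N²−N−1)δ)/((N−1)N²), and this limit is strictly negative; in particular h₃(λ) < 0 for all sufficiently small λ > 0. -/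

import Mathlib

open Filter

/-- `d(λ) = √(γλ)·δ`. -/
noncomputable def dCoef (γ δ lam : ℝ) : ℝ := Real.sqrt (γ * lam) * δ

/-- The discriminant `R(λ)` appearing in the explicit formula for `a(λ)`. -/
noncomputable def RCoef (N : ℕ) (γ ρ δ lam : ℝ) : ℝ :=
  ρ ^ 2 + (8 * γ * (N : ℝ) ^ 2 - 4 * dCoef γ δ lam * ρ * (3 * (N : ℝ) + 1))
      / (lam * ((N : ℝ) + 1) ^ 2)
    - 4 * (dCoef γ δ lam) ^ 2 * (3 * (N : ℝ) + 1)
      / (lam ^ 2 * ((N : ℝ) - 1) * ((N : ℝ) + 1) ^ 2)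

/-- The coefficient `a(λ)`. -/
noncomputable def aCoef (N : ℕ) (γ ρ δ lam : ℝ) : ℝ :=
  (dCoef γ δ lam * (6 * (N : ℝ) + 2)
      - lam * ((N : ℝ) + 1) ^ 2 * (ρ - Real.sqrt (RCoef N γ ρ δ lam)))
    / (4 * (N : ℝ) ^ 2)

/-- `h₃(λ) = −(2a(λ)(N−1) + (N−3)d(λ))/(λ(N−1)(N+1))`. -/
noncomputable def h3Coef (N : ℕ) (γ ρ δ lam : ℝ) : ℝ :=
  -(2 * aCoef N γ ρ δ lam * ((N : ℝ) - 1) + ((N : ℝ) - 3) * dCoef γ δ lam)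
    / (lam * ((N : ℝ) - 1) * ((N : ℝ) + 1))

/-- `D̄(N,y) = √((2N³ − 2N² − (3N+1)y²)/((N−1)(N+1)²))`. -/
noncomputable def Dbar (N : ℕ) (y : ℝ) : ℝ :=
  Real.sqrt ((2 * (N : ℝ) ^ 3 - 2 * (N : ℝ) ^ 2 - (3 * (N : ℝ) + 1) * y ^ 2)
    / (((N : ℝ) - 1) * ((N : ℝ) + 1) ^ 2))

/-! With `u = √(λ/γ)` one has `√(γλ) = γu` and `λ = γu²`, so `(λ/γ)·R(λ)` is a polynomial in `u`
and `u·h₃(λ)` becomes an expression in `u` and `√((λ/γ)·R(λ))` that is continuous at `u = 0`.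
Its value there is the stated limit, negative because `D̄ ≥ 0` and `δ > 0`; since `u > 0`,
`h₃` inherits the sign of `u·h₃` near `0⁺`. -/

/-- `(λ/γ)·R(λ)`, written as a function of `λ` that is continuous through `λ = 0`. -/
noncomputable def scaledRCoef (N : ℕ) (γ ρ δ lam : ℝ) : ℝ :=
  lam * ρ ^ 2 / γ + 8 * (N : ℝ) ^ 2 / ((N : ℝ) + 1) ^ 2
    - 4 * Real.sqrt (lam / γ) * δ * ρ * (3 * (N : ℝ) + 1) / ((N : ℝ) + 1) ^ 2
    - 4 * δ ^ 2 * (3 * (N : ℝ) + 1) / (((N : ℝ) - 1) * ((N : ℝ) + 1) ^ 2)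

/-- The limit of `√(λ/γ)·h₃(λ)` as `λ → 0⁺`. -/
noncomputable def h3Limit (N : ℕ) (δ : ℝ) : ℝ :=
  -((((N : ℝ) ^ 2 - 1) * Dbar N δ + ((N : ℝ) ^ 2 - (N : ℝ) - 1) * δ)
    / (((N : ℝ) - 1) * (N : ℝ) ^ 2))

lemma Real.sqrt_mul_eq_mul_sqrt_div {γ : ℝ} (hγ : 0 < γ) (x : ℝ) :
    Real.sqrt (γ * x) = γ * Real.sqrt (x / γ) := by
  rw [← Real.sqrt_sq hγ.le, ← Real.sqrt_mul (sq_nonneg γ), Real.sqrt_sq hγ.le]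
  congr 1
  field_simp

lemma Real.mul_sqrt_div_sq {γ x : ℝ} (hγ : 0 < γ) (hx : 0 ≤ x) :
    γ * Real.sqrt (x / γ) ^ 2 = x := by
  rw [Real.sq_sqrt (div_nonneg hx hγ.le)]
  field_simp

section

variable {N : ℕ} {γ : ℝ} (ρ δ : ℝ)

lemma scaledRCoef_eq (hγ : 0 < γ) {lam : ℝ} (hlam : 0 < lam) :
    scaledRCoef N γ ρ δ lam = lam / γ * RCoef N γ ρ δ lam := by
  unfold scaledRCoef RCoef dCoef
  rw [Real.sqrt_mul_eq_mul_sqrt_div hγ lam]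
  have hu0 : 0 < Real.sqrt (lam / γ) := Real.sqrt_pos.mpr (div_pos hlam hγ)
  have hu2 := Real.mul_sqrt_div_sq hγ hlam.le
  generalize Real.sqrt (lam / γ) = u at hu0 hu2 ⊢
  subst hu2
  field_simp
  ring

lemma sqrt_div_mul_h3Coef (hN : 1 < N) (hγ : 0 < γ) {lam : ℝ} (hlam : 0 < lam) :
    Real.sqrt (lam / γ) * h3Coef N γ ρ δ lam =
      -((((N : ℝ) ^ 2 - (N : ℝ) - 1) * δ / ((N : ℝ) - 1)
        - ((N : ℝ) + 1) * (ρ * Real.sqrt (lam / γ) - Real.sqrt (scaledRCoef N γ ρ δ lam)) / 2)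
      / (N : ℝ) ^ 2) := by
  have hN1 : (1 : ℝ) < N := by exact_mod_cast hN
  have hNm1 : (N : ℝ) - 1 ≠ 0 := by linarith
  rw [scaledRCoef_eq ρ δ hγ hlam, Real.sqrt_mul (div_nonneg hlam.le hγ.le)]
  unfold h3Coef aCoef dCoef
  rw [Real.sqrt_mul_eq_mul_sqrt_div hγ lam]
  generalize Real.sqrt (RCoef N γ ρ δ lam) = r
  have hu0 : 0 < Real.sqrt (lam / γ) := Real.sqrt_pos.mpr (div_pos hlam hγ)
  have hu2 := Real.mul_sqrt_div_sq hγ hlam.le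
  generalize Real.sqrt (lam / γ) = u at hu0 hu2 ⊢
  subst hu2
  field_simp
  ring

lemma sqrt_scaledRCoef_zero (hN : 1 < N) :
    Real.sqrt (scaledRCoef N γ ρ δ 0) = 2 * Dbar N δ := by
  have hN1 : (1 : ℝ) < N := by exact_mod_cast hN
  have hNm1 : (N : ℝ) - 1 ≠ 0 := by linarith
  have h : scaledRCoef N γ ρ δ 0 = 2 ^ 2 * ((2 * (N : ℝ) ^ 3 - 2 * (N : ℝ) ^ 2
      - (3 * (N : ℝ) + 1) * δ ^ 2) / (((N : ℝ) - 1) * ((N : ℝ) + 1) ^ 2)) := by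
    unfold scaledRCoef
    rw [zero_div, Real.sqrt_zero]
    field_simp
    ring
  rw [h, Real.sqrt_mul (sq_nonneg 2), Real.sqrt_sq zero_le_two, Dbar]

lemma tendsto_sqrt_div_mul_h3Coef (hN : 1 < N) (hγ : 0 < γ) :
    Tendsto (fun lam => Real.sqrt (lam / γ) * h3Coef N γ ρ δ lam)
      (nhdsWithin 0 (Set.Ioi 0)) (nhds (h3Limit N δ)) := by
  have hNm1 : (N : ℝ) - 1 ≠ 0 := by
    have : (1 : ℝ) < N := by exact_mod_cast hN
    linarith
  set F := fun lam : ℝ => -((((N : ℝ) ^ 2 - (N : ℝ) - 1) * δ / ((N : ℝ) - 1)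
      - ((N : ℝ) + 1) * (ρ * Real.sqrt (lam / γ) - Real.sqrt (scaledRCoef N γ ρ δ lam)) / 2)
      / (N : ℝ) ^ 2)
  have hF : Continuous F := by
    unfold F scaledRCoef
    fun_prop
  have hF0 : F 0 = h3Limit N δ := by
    simp only [F, zero_div, Real.sqrt_zero, mul_zero, sqrt_scaledRCoef_zero ρ δ hN, h3Limit]
    field_simp
    ring
  refine (hF0 ▸ hF.continuousWithinAt.tendsto).congr' ?_
  filter_upwards [self_mem_nhdsWithin] with lam hlam
  exact (sqrt_div_mul_h3Coef ρ δ hN hγ hlam).symm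

end

lemma h3Limit_neg {N : ℕ} (hN : 1 < N) {δ : ℝ} (hδ : 0 < δ) : h3Limit N δ < 0 := by
  have hN2 : (2 : ℝ) ≤ N := by exact_mod_cast hN
  have hD : 0 ≤ ((N : ℝ) ^ 2 - 1) * Dbar N δ :=
    mul_nonneg (by nlinarith) (Real.sqrt_nonneg _)
  have hδ' : 0 < ((N : ℝ) ^ 2 - N - 1) * δ := mul_pos (by nlinarith) hδ
  rw [h3Limit, neg_lt_zero]
  exact div_pos (by linarith) (mul_pos (by linarith) (by positivity))

theorem h3_asymptotics
    (N : ℕ) (hN : 2 ≤ N) (γ ρ : ℝ) (hγ : 0 < γ)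
    (δ : ℝ) (hδ0 : 0 < δ) :
    Tendsto (fun lam : ℝ => Real.sqrt (lam / γ) * h3Coef N γ ρ δ lam)
      (nhdsWithin (0 : ℝ) (Set.Ioi 0))
      (nhds (-((((N : ℝ) ^ 2 - 1) * Dbar N δ + ((N : ℝ) ^ 2 - (N : ℝ) - 1) * δ)
        / (((N : ℝ) - 1) * (N : ℝ) ^ 2)))) ∧
    (-((((N : ℝ) ^ 2 - 1) * Dbar N δ + ((N : ℝ) ^ 2 - (N : ℝ) - 1) * δ)
        / (((N : ℝ) - 1) * (N : ℝ) ^ 2)) < 0) ∧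
    (∀ᶠ lam in nhdsWithin (0 : ℝ) (Set.Ioi 0), h3Coef N γ ρ δ lam < 0) := by
  have hlim := tendsto_sqrt_div_mul_h3Coef ρ δ hN hγ
  have hneg := h3Limit_neg hN hδ0
  refine ⟨hlim, hneg, ?_⟩
  filter_upwards [hlim.eventually (eventually_lt_nhds hneg)] with lam hprod
  exact neg_of_mul_neg_right hprod (Real.sqrt_nonneg _)
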